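/- arXiv:2308.11791 — 2 statements merged into one kernel-verified Lean document; each statement's English description precedes it below -/
import Mathlib

section
/- For every real c, the sublevel set { 𝐏 : 𝐏_k ≥ 0 for all k and S(𝐏, 𝐐) ≤ c } is a compact subset of the space of real arrays on the finite product index set. -/
/-!
Each summand `x (log (x / q) - 1) = q (klFun (x / q) - 1)` is at least `-q`, so a bound on the
entropy bounds every summand, and a summand grows at least like `x` once `x ≥ q e²`: the sublevel
set lies in a box. It is closed because `x ↦ x log x` is continuous at `0`.
-/

open Real InformationTheory

lemma Finset.apply_le_of_sum_le {ι α : Type*} [Fintype ι] [AddCommGroup α] [PartialOrder α]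
    [IsOrderedAddMonoid α] {f g : ι → α} {c : α} (hfg : ∀ j, -g j ≤ f j)
    (hf : ∑ j, f j ≤ c) (k : ι) : f k ≤ c + ∑ j, g j - g k := by
  have hk : f k + g k ≤ ∑ j, (f j + g j) :=
    Finset.single_le_sum (f := fun j => f j + g j)
      (fun j _ => neg_le_iff_add_nonneg.mp (hfg j)) (Finset.mem_univ k)
  rw [Finset.sum_add_distrib] at hk
  rw [le_sub_iff_add_le]
  exact hk.trans (by gcongr)

lemma mul_log_div_sub_one_eq_mul_klFun {q : ℝ} (hq : q ≠ 0) (x : ℝ) :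
    x * (log (x / q) - 1) = q * (klFun (x / q) - 1) := by
  rw [klFun_apply]
  field_simp
  ring

lemma neg_le_mul_log_div_sub_one {q x : ℝ} (hq : 0 < q) (hx : 0 ≤ x) :
    -q ≤ x * (log (x / q) - 1) := by
  rw [mul_log_div_sub_one_eq_mul_klFun hq.ne']
  nlinarith [klFun_nonneg (div_nonneg hx hq.le)]

lemma continuous_mul_log_div_sub_one {q : ℝ} (hq : q ≠ 0) :
    Continuous fun x : ℝ => x * (log (x / q) - 1) := by
  simp_rw [mul_log_div_sub_one_eq_mul_klFun hq]
  exact continuous_const.mul ((continuous_klFun.comp (continuous_id.div_const q)).sub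
    continuous_const)

/-- Beyond `q e²` the factor `log (x / q) - 1` is at least `1`. -/
lemma le_max_of_mul_log_div_sub_one_le {q x C : ℝ} (hq : 0 < q)
    (h : x * (log (x / q) - 1) ≤ C) : x ≤ max C (q * exp 2) := by
  rcases le_or_gt x (q * exp 2) with hx | hx
  · exact le_max_of_le_right hx
  · have hx0 : 0 < x := lt_of_le_of_lt (by positivity) hx
    have hlog : 2 ≤ log (x / q) := by
      rw [le_log_iff_exp_le (by positivity), le_div_iff₀ hq]
      linarith
    exact le_max_of_le_left (by nlinarith)

section Entropy

variable {ι : Type*} [Fintype ι]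

noncomputable def entropy (Q P : ι → ℝ) : ℝ :=
  ∑ k, P k * (log (P k / Q k) - 1)

lemma continuous_entropy {Q : ι → ℝ} (hQ : ∀ k, Q k ≠ 0) : Continuous (entropy Q) :=
  continuous_finsetSum _ fun k _ =>
    (continuous_mul_log_div_sub_one (hQ k)).comp (continuous_apply k)

lemma apply_le_of_entropy_le {Q P : ι → ℝ} {c : ℝ} (hQ : ∀ k, 0 < Q k) (hP : 0 ≤ P)
    (h : entropy Q P ≤ c) (k : ι) : P k ≤ max (c + ∑ j, Q j - Q k) (Q k * exp 2) :=
  le_max_of_mul_log_div_sub_one_le (hQ k) <|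
    Finset.apply_le_of_sum_le (fun j => neg_le_mul_log_div_sub_one (hQ j) (hP j)) h k

lemma isCompact_entropy_sublevel {Q : ι → ℝ} (hQ : ∀ k, 0 < Q k) (c : ℝ) :
    IsCompact {P | 0 ≤ P ∧ entropy Q P ≤ c} := by
  refine (isCompact_univ_pi fun k =>
    isCompact_Icc (a := 0) (b := max (c + ∑ j, Q j - Q k) (Q k * exp 2))).of_isClosed_subset
    (isClosed_Ici.inter (isClosed_le (continuous_entropy fun k => (hQ k).ne') continuous_const))
    ?_
  rintro P ⟨hP, hPc⟩ k -
  exact ⟨hP k, apply_le_of_entropy_le hQ hP hPc k⟩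

end Entropy

theorem entropy_sublevel_set_isCompact_general
    (n : ℕ) (I : Fin n → Type)
    [∀ ℓ, Fintype (I ℓ)]
    (Q : (∀ ℓ, I ℓ) → ℝ) (hQ : ∀ k, 0 < Q k) (c : ℝ) :
    IsCompact {P : (∀ ℓ, I ℓ) → ℝ | (∀ k, 0 ≤ P k) ∧
      ∑ k : ∀ ℓ, I ℓ, P k * (Real.log (P k / Q k) - 1) ≤ c} :=
  isCompact_entropy_sublevel hQ c

/-- For every real `c`, the sublevel set
`{𝐏 : 𝐏 ≥ 0 entrywise and S(𝐏, 𝐐) ≤ c}` of the entropy functional is a compact subset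
of the space of real arrays on the finite product index set. -/
theorem entropy_sublevel_set_isCompact
    (n : ℕ) (I : Fin n → Type)
    [∀ ℓ, Fintype (I ℓ)] [∀ ℓ, Nonempty (I ℓ)]
    (Q : (∀ ℓ, I ℓ) → ℝ) (hQ : ∀ k, 0 < Q k) (c : ℝ) :
    IsCompact {P : (∀ ℓ, I ℓ) → ℝ | (∀ k, 0 ≤ P k) ∧
      ∑ k : ∀ ℓ, I ℓ, P k * (Real.log (P k / Q k) - 1) ≤ c} :=
  entropy_sublevel_set_isCompact_general n I Q hQ c
end

section
/- Verification theorem for the signed multi-marginal Schrödinger problem: let 𝐐 be an array with strictly positive entries and X an array with values in {−1, +1}, and suppose there exist strictly positive scalars α^{(ℓ)}_j (for each ℓ ∈ {1,…,n} and j ∈ I_ℓ) such that the array 𝐏 defined by 𝐏_k = 𝐐_k · Π_{ℓ=1}^n (α^{(ℓ)}_{k_ℓ})^{X_k} satisfies all signed marginal constraints Σ_{k : k_ℓ = j} X_k 𝐏_k = p^{(ℓ)}_j. Then for every nonnegative array 𝐏' satisfying the same signed marginal constraints, S(𝐏', 𝐐) ≥ S(𝐏, 𝐐), with equality if and only if 𝐏'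 = 𝐏. -/
/-!
Since `log (𝐏_k / 𝐐_k) = X_k · Σ_ℓ log α^{(ℓ)}_{k_ℓ}` is `X_k` times a sum of functions of single
coordinates, its pairing with any array depends only on that array's signed marginals. Hence for
every admissible `𝐏'` the cross terms cancel and `S(𝐏', 𝐐) - S(𝐏, 𝐐) = Σ_k 𝐏_k · klFun (𝐏'_k / 𝐏_k)`,
where `klFun x = x log x + 1 - x` is nonnegative on `[0, ∞)` and vanishes only at `x = 1`.
-/

open Real Finset InformationTheory

noncomputable def schrodingerEntropy {κ : Type*} [Fintype κ] (P Q : κ → ℝ) : ℝ :=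
  ∑ k, P k * (log (P k / Q k) - 1)

lemma mul_log_div_sub_one_sub_mul_log_div_sub_one {p p' q : ℝ} (hp : 0 < p) (hq : 0 < q) :
    p' * (log (p' / q) - 1) - p * (log (p / q) - 1) =
      p * klFun (p' / p) + (p' - p) * log (p / q) := by
  rcases eq_or_ne p' 0 with rfl | hp'
  · rw [zero_div, zero_div, klFun_zero]
    ring
  · rw [klFun, log_div hp' hq.ne', log_div hp.ne' hq.ne', log_div hp' hp.ne']
    field_simp
    ring

section Entropy

variable {κ : Type*} [Fintype κ] {P P' Q : κ → ℝ}

theorem schrodingerEntropy_sub_eq_sum_klFun (hP : ∀ k, 0 < P k) (hQ : ∀ k, 0 < Q k)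
    (hlog : ∑ k, P' k * log (P k / Q k) = ∑ k, P k * log (P k / Q k)) :
    schrodingerEntropy P' Q - schrodingerEntropy P Q = ∑ k, P k * klFun (P' k / P k) := by
  unfold schrodingerEntropy
  rw [← sum_sub_distrib]
  simp only [mul_log_div_sub_one_sub_mul_log_div_sub_one (hP _) (hQ _), sum_add_distrib,
    sub_mul, sum_sub_distrib, hlog, sub_self, add_zero]

theorem schrodingerEntropy_le_and_eq_iff (hP : ∀ k, 0 < P k) (hQ : ∀ k, 0 < Q k)
    (hP' : ∀ k, 0 ≤ P' k)
    (hlog : ∑ k, P' k * log (P k / Q k) = ∑ k, P k * log (P k / Q k)) :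
    schrodingerEntropy P Q ≤ schrodingerEntropy P' Q ∧
      (schrodingerEntropy P' Q = schrodingerEntropy P Q ↔ P' = P) := by
  have hgap := schrodingerEntropy_sub_eq_sum_klFun hP hQ hlog
  have hterm : ∀ k ∈ univ, 0 ≤ P k * klFun (P' k / P k) := fun k _ =>
    mul_nonneg (hP k).le (klFun_nonneg (div_nonneg (hP' k) (hP k).le))
  refine ⟨by linarith [sum_nonneg hterm], ?_⟩
  rw [← sub_eq_zero, hgap, sum_eq_zero_iff_of_nonneg hterm, funext_iff]
  refine forall_congr' fun k => ?_
  rw [mul_eq_zero, klFun_eq_zero_iff (div_nonneg (hP' k) (hP k).le),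
    div_eq_one_iff_eq (hP k).ne']
  simp [(hP k).ne']

end Entropy

section Marginals

variable {ι : Type*} [Fintype ι] [DecidableEq ι] {I : ι → Type*} [∀ i, Fintype (I i)] [∀ i, DecidableEq (I i)]

def marginal (w : (∀ i, I i) → ℝ) (i : ι) (j : I i) : ℝ :=
  ∑ k, if k i = j then w k else 0

lemma sum_mul_sum_apply_eq_sum_marginal (w : (∀ i, I i) → ℝ) (f : ∀ i, I i → ℝ) :
    ∑ k, w k * ∑ i, f i (k i) = ∑ i, ∑ j, marginal w i j * f i j := by
  simp_rw [mul_sum]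
  rw [sum_comm]
  refine sum_congr rfl fun i _ => ?_
  simp_rw [marginal, sum_mul, ite_mul, zero_mul]
  rw [sum_comm]
  simp

lemma log_ite_inv_eq_mul_log {x : ℝ} (hx : x = 1 ∨ x = -1) (c : ℝ) :
    log (if x = 1 then c else c⁻¹) = x * log c := by
  rcases hx with rfl | rfl <;> norm_num [log_inv]

lemma sum_mul_log_div_eq_of_marginal_eq {Q X P R R' : (∀ i, I i) → ℝ} {α : ∀ i, I i → ℝ}
    (hQ : ∀ k, 0 < Q k) (hX : ∀ k, X k = 1 ∨ X k = -1) (hα : ∀ i j, 0 < α i j)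
    (hP : ∀ k, P k = Q k * (if X k = 1 then ∏ i, α i (k i) else (∏ i, α i (k i))⁻¹))
    (hR : ∀ i j, marginal (fun k => X k * R k) i j = marginal (fun k => X k * R' k) i j) :
    ∑ k, R k * log (P k / Q k) = ∑ k, R' k * log (P k / Q k) := by
  have hlog : ∀ k, log (P k / Q k) = X k * ∑ i, log (α i (k i)) := fun k => by
    rw [hP, mul_div_cancel_left₀ _ (hQ k).ne', log_ite_inv_eq_mul_log (hX k),
      log_prod fun i _ => (hα i (k i)).ne']
  have hpair : ∀ S : (∀ i, I i) → ℝ, ∑ k, S k * log (P k / Q k) =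
      ∑ i, ∑ j, marginal (fun k => X k * S k) i j * log (α i j) := fun S => by
    rw [← sum_mul_sum_apply_eq_sum_marginal]
    exact sum_congr rfl fun k _ => by rw [hlog]; ring
  simp only [hpair, hR]

end Marginals

theorem signed_schrodinger_verification_general
    (n : ℕ) (I : Fin n → Type)
    [∀ ℓ, Fintype (I ℓ)] [∀ ℓ, DecidableEq (I ℓ)]
    (Q : (∀ ℓ, I ℓ) → ℝ) (hQ : ∀ k, 0 < Q k)
    (X : (∀ ℓ, I ℓ) → ℝ) (hX : ∀ k, X k = 1 ∨ X k = -1)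
    (p : ∀ ℓ, I ℓ → ℝ)
    (α : ∀ ℓ, I ℓ → ℝ) (hα : ∀ ℓ j, 0 < α ℓ j)
    (P : (∀ ℓ, I ℓ) → ℝ)
    (hPdef : ∀ k, P k = Q k *
      (if X k = 1 then ∏ ℓ, α ℓ (k ℓ) else (∏ ℓ, α ℓ (k ℓ))⁻¹))
    (hPmarg : ∀ (ℓ : Fin n) (j : I ℓ),
      ∑ k : ∀ ℓ, I ℓ, (if k ℓ = j then X k * P k else 0) = p ℓ j) :
    ∀ P' : (∀ ℓ, I ℓ) → ℝ, (∀ k, 0 ≤ P' k) →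
      (∀ (ℓ : Fin n) (j : I ℓ),
        ∑ k : ∀ ℓ, I ℓ, (if k ℓ = j then X k * P' k else 0) = p ℓ j) →
      (∑ k : ∀ ℓ, I ℓ, P k * (Real.log (P k / Q k) - 1) ≤
          ∑ k : ∀ ℓ, I ℓ, P' k * (Real.log (P' k / Q k) - 1) ∧
        (∑ k : ∀ ℓ, I ℓ, P' k * (Real.log (P' k / Q k) - 1) =
            ∑ k : ∀ ℓ, I ℓ, P k * (Real.log (P k / Q k) - 1) ↔ P' = P)) := by
  intro P' hP' hP'marg
  have hP : ∀ k, 0 < P k := fun k => by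
    have := prod_pos fun ℓ (_ : ℓ ∈ univ) => hα ℓ (k ℓ)
    rw [hPdef]
    split_ifs <;> have := hQ k <;> positivity
  have hlog := sum_mul_log_div_eq_of_marginal_eq hQ hX hα hPdef (R := P') (R' := P)
    fun ℓ j => (hP'marg ℓ j).trans (hPmarg ℓ j).symm
  exact schrodingerEntropy_le_and_eq_iff hP hQ hP' hlog

/-- Verification theorem for the signed multi-marginal Schrödinger
problem: if `𝐏_k = 𝐐_k · Π_ℓ (α^{(ℓ)}_{k_ℓ})^{X_k}` (with `(α)^{X_k} = α` when
`X_k = +1` and `= α⁻¹` when `X_k = −1`) with strictly positive scalings satisfies the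
signed marginal constraints, then `𝐏` minimizes `S(·, 𝐐)` over all nonnegative arrays
with the same signed marginals, and it is the unique minimizer. -/
theorem signed_schrodinger_verification
    (n : ℕ) (hn : 1 ≤ n) (I : Fin n → Type)
    [∀ ℓ, Fintype (I ℓ)] [∀ ℓ, Nonempty (I ℓ)] [∀ ℓ, DecidableEq (I ℓ)]
    (Q : (∀ ℓ, I ℓ) → ℝ) (hQ : ∀ k, 0 < Q k)
    (X : (∀ ℓ, I ℓ) → ℝ) (hX : ∀ k, X k = 1 ∨ X k = -1)
    (p : ∀ ℓ, I ℓ → ℝ) (hp : ∀ ℓ j, 0 < p ℓ j)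
    (α : ∀ ℓ, I ℓ → ℝ) (hα : ∀ ℓ j, 0 < α ℓ j)
    (P : (∀ ℓ, I ℓ) → ℝ)
    (hPdef : ∀ k, P k = Q k *
      (if X k = 1 then ∏ ℓ, α ℓ (k ℓ) else (∏ ℓ, α ℓ (k ℓ))⁻¹))
    (hPmarg : ∀ (ℓ : Fin n) (j : I ℓ),
      ∑ k : ∀ ℓ, I ℓ, (if k ℓ = j then X k * P k else 0) = p ℓ j) :
    ∀ P' : (∀ ℓ, I ℓ) → ℝ, (∀ k, 0 ≤ P' k) →
      (∀ (ℓ : Fin n) (j : I ℓ),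
        ∑ k : ∀ ℓ, I ℓ, (if k ℓ = j then X k * P' k else 0) = p ℓ j) →
      (∑ k : ∀ ℓ, I ℓ, P k * (Real.log (P k / Q k) - 1) ≤
          ∑ k : ∀ ℓ, I ℓ, P' k * (Real.log (P' k / Q k) - 1) ∧
        (∑ k : ∀ ℓ, I ℓ, P' k * (Real.log (P' k / Q k) - 1) =
            ∑ k : ∀ ℓ, I ℓ, P k * (Real.log (P k / Q k) - 1) ↔ P' = P)) :=
  signed_schrodinger_verification_general n I Q hQ X hX p α hα P hPdef hPmarg
end
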